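/- arXiv:math/0610274 — 2 statements merged into one kernel-verified Lean document; each statement's English description precedes it below -/
import Mathlib

section
/- Let v = φ^(e) * μ_3 * μ (Dirichlet convolutions), where φ^(e) is the multiplicative function with φ^(e)(p^a)=φ(a). Then v(p^a)=0 for 1≤a≤4, and v(p^a)=φ(a)-φ(a-1)-φ(a-3)+φ(a-4) for a≥5, for every prime p. -/
open ArithmeticFunction
open scoped ArithmeticFunction.Moebius

/-- `μ₃(n) = μ(m)` if `n = m³`, and `0` otherwise. -/
def mu3 : ArithmeticFunction ℤ :=
  ⟨fun n => ∑ m ∈ n.divisors, if m ^ 3 = n then μ m else 0, by simp⟩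

/-- `φ^(e)`, the multiplicative function with `φ^(e)(p^a) = φ(a)`, as an
integer-valued arithmetic function. -/
def phieA : ArithmeticFunction ℤ :=
  ⟨fun n => if n = 0 then 0 else (n.factorization.prod fun _ a => Nat.totient a : ℕ), by simp⟩

/-!
On powers of a fixed prime `p`, Dirichlet convolution becomes the Cauchy product of the exponent
sequences. Both `μ₃` and `μ` have exponent sequence `1 - X^k` (with `k = 3` and `k = 1`), so
convolving with them is the difference operator `e(a) ↦ e(a) - e(a - k)`. Applied to the sequence
`e(0) = 1`, `e(a) = φ(a)` of `φ^(e)` this gives the formula, and for `a ≤ 4` the terms cancel.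
-/

open Finset

section PrimePower

variable {R : Type*} {p : ℕ}

theorem ArithmeticFunction.mul_apply_prime_pow [Semiring R] (f g : ArithmeticFunction R)
    (hp : p.Prime) (a : ℕ) :
    (f * g) (p ^ a) = ∑ j ∈ range (a + 1), f (p ^ (a - j)) * g (p ^ j) := by
  rw [mul_apply, Nat.sum_divisorsAntidiagonal' (fun i j => f i * g j),
    Nat.sum_divisors_prime_pow hp]
  refine sum_congr rfl fun j hj => ?_
  rw [Nat.pow_div (Nat.lt_succ_iff.mp (mem_range.mp hj)) hp.pos]

theorem ArithmeticFunction.mul_apply_prime_pow_of_eq_one_sub [Ring R]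
    (f g : ArithmeticFunction R) (hp : p.Prime) {k : ℕ} (hk : k ≠ 0)
    (hg : ∀ j, g (p ^ j) = if j = 0 then 1 else if j = k then -1 else 0) (a : ℕ) :
    (f * g) (p ^ a) = f (p ^ a) - if k ≤ a then f (p ^ (a - k)) else 0 := by
  have hg' : ∀ j, g (p ^ j) = (if j = 0 then 1 else 0) - if j = k then 1 else 0 := by
    intro j
    rw [hg]
    split_ifs <;> simp_all
  simp only [mul_apply_prime_pow f g hp, hg', mul_sub, mul_ite, mul_one, mul_zero,
    sum_sub_distrib, sum_ite_eq', mem_range, Nat.sub_zero, Nat.lt_succ_iff, Nat.zero_le, if_true]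

theorem ArithmeticFunction.moebius_apply_prime_pow_eq_ite (hp : p.Prime) (j : ℕ) :
    (μ (p ^ j) : ℤ) = if j = 0 then 1 else if j = 1 then -1 else 0 := by
  rcases eq_or_ne j 0 with rfl | hj
  · simp
  · rw [if_neg hj, moebius_apply_prime_pow hp hj]

theorem phieA_apply_prime_pow (hp : p.Prime) (i : ℕ) :
    phieA (p ^ i) = if i = 0 then 1 else (Nat.totient i : ℤ) := by
  rcases eq_or_ne i 0 with rfl | hi
  · simp [phieA]
  · simp only [phieA, coe_mk, pow_eq_zero_iff', hp.ne_zero, false_and, if_false, hi,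
      hp.factorization_pow]
    rw [Finsupp.prod, Finsupp.support_single _ hi, prod_singleton, Finsupp.single_eq_same]

theorem mu3_apply_prime_pow (hp : p.Prime) (j : ℕ) :
    mu3 (p ^ j) = if 3 ∣ j then μ (p ^ (j / 3)) else 0 := by
  have hcube : ∀ i, (p ^ i) ^ 3 = p ^ j ↔ 3 * i = j := fun i => by
    rw [← pow_mul, mul_comm, Nat.pow_right_injective hp.two_le |>.eq_iff]
  change ∑ m ∈ (p ^ j).divisors, (if m ^ 3 = p ^ j then μ m else 0 : ℤ) = _
  simp only [Nat.sum_divisors_prime_pow hp, hcube]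
  split_ifs with h3
  · obtain ⟨k, rfl⟩ := h3
    simp only [mul_right_inj' three_ne_zero, sum_ite_eq', mem_range,
      Nat.mul_div_cancel_left k three_pos]
    exact if_pos (by omega)
  · exact sum_eq_zero fun i _ => if_neg fun h => h3 ⟨i, h.symm⟩

theorem mu3_apply_prime_pow_eq_ite (hp : p.Prime) (j : ℕ) :
    mu3 (p ^ j) = if j = 0 then 1 else if j = 3 then -1 else 0 := by
  by_cases h3 : 3 ∣ j
  · obtain ⟨k, rfl⟩ := h3
    rw [mu3_apply_prime_pow hp, if_pos (dvd_mul_right 3 k), Nat.mul_div_cancel_left k three_pos,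
      moebius_apply_prime_pow_eq_ite hp]
    split_ifs <;> omega
  · rw [mu3_apply_prime_pow hp, if_neg h3]
    split_ifs <;> omega

theorem mul_mu3_mul_moebius_apply_prime_pow (f : ArithmeticFunction ℤ) (hp : p.Prime) (a : ℕ) :
    (f * mu3 * μ) (p ^ a) =
      f (p ^ a) - (if 3 ≤ a then f (p ^ (a - 3)) else 0)
        - if 1 ≤ a then f (p ^ (a - 1)) - (if 4 ≤ a then f (p ^ (a - 4)) else 0) else 0 := by
  simp only [mul_apply_prime_pow_of_eq_one_sub _ _ hp one_ne_zero
      (moebius_apply_prime_pow_eq_ite hp),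
    mul_apply_prime_pow_of_eq_one_sub _ _ hp three_ne_zero (mu3_apply_prime_pow_eq_ite hp)]
  rcases Nat.lt_or_ge a 1 with ha | ha
  · simp [show ¬1 ≤ a by omega, show ¬3 ≤ a by omega]
  · simp only [if_pos ha, show 3 ≤ a - 1 ↔ 4 ≤ a by omega, show a - 1 - 3 = a - 4 by omega]

end PrimePower

theorem v_prime_powers (p : ℕ) (hp : p.Prime) :
    (∀ a : ℕ, 1 ≤ a → a ≤ 4 → (phieA * mu3 * μ) (p ^ a) = 0) ∧
      ∀ a : ℕ, 5 ≤ a → (phieA * mu3 * μ) (p ^ a) =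
        (Nat.totient a : ℤ) - Nat.totient (a - 1) - Nat.totient (a - 3) + Nat.totient (a - 4) := by
  simp only [mul_mu3_mul_moebius_apply_prime_pow _ hp, phieA_apply_prime_pow hp]
  constructor
  · intro a h1 h4
    interval_cases a <;> decide
  · intro a h5
    simp only [if_pos (show 1 ≤ a by omega), if_pos (show 3 ≤ a by omega),
      if_pos (show 4 ≤ a by omega), show a ≠ 0 by omega, show a - 1 ≠ 0 by omega,
      show a - 3 ≠ 0 by omega, show a - 4 ≠ 0 by omega, if_false]
    ring
end

section
/- The function φ^(e) equals the Dirichlet convolution v * τ(1,3,·), where τ(1,3,n)=∑_{ab^3=n}1 and v is the multiplicative function with v(p^a)=0 for 1≤a≤4 and v(p^a)=φ(a)-φ(a-1)-φ(a-3)+φ(a-4) for a≥5. -/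
open ArithmeticFunction

open scoped Classical in
/-- `τ(1,3;n)`: the number of pairs `(a,b)` with `a * b³ = n`,
i.e. the number of `b` with `b³ ∣ n`. -/
noncomputable def tau13 : ArithmeticFunction ℤ :=
  ⟨fun n => (((n.divisors).filter fun b => b ^ 3 ∣ n).card : ℤ), by simp⟩

/-!
Both sides are multiplicative, so it suffices to compare their Euler factors
`∑ f (p ^ k) X ^ k`, which multiply under Dirichlet convolution. Since
`τ(1,3,·) = 1_{cubes} * ζ`, the Euler factor of `τ(1,3,·)` is `1 / ((1 - X) (1 - X³))`,
and the prescribed values of `v` say precisely that its Euler factor is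
`(1 - X) (1 - X³)` times that of `φ^(e)`, which is `1 + ∑_{k ≥ 1} φ(k) X ^ k`.
-/

theorem Nat.Coprime.exists_pow_eq_mul_iff {m n k : ℕ} (h : m.Coprime n) :
    (∃ r, r ^ k = m * n) ↔ (∃ r, r ^ k = m) ∧ ∃ r, r ^ k = n := by
  constructor
  · rintro ⟨r, hr⟩
    obtain ⟨a, ha⟩ := exists_eq_pow_of_mul_eq_pow (Nat.isUnit_iff.2 h) hr.symm
    obtain ⟨b, hb⟩ := exists_eq_pow_of_mul_eq_pow (Nat.isUnit_iff.2 h.symm)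
      ((mul_comm n m).trans hr.symm)
    exact ⟨⟨a, ha.symm⟩, ⟨b, hb.symm⟩⟩
  · rintro ⟨⟨a, rfl⟩, ⟨b, rfl⟩⟩
    exact ⟨a * b, mul_pow a b k⟩

theorem Nat.Prime.exists_pow_eq_pow_iff {p k n : ℕ} (hp : p.Prime) (hk : k ≠ 0) :
    (∃ r, r ^ k = p ^ n) ↔ k ∣ n := by
  constructor
  · rintro ⟨r, hr⟩
    obtain ⟨m, -, rfl⟩ := (Nat.dvd_prime_pow hp).1 (hr ▸ dvd_pow_self r hk)
    rw [← pow_mul, Nat.pow_right_inj hp.one_lt] at hr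
    exact ⟨m, hr ▸ mul_comm m k⟩
  · rintro ⟨m, rfl⟩
    exact ⟨p ^ m, by rw [← pow_mul, mul_comm]⟩

namespace PowerSeries

variable {R : Type*} [Ring R]

theorem coeff_one_sub_X_pow_mul (f : R⟦X⟧) (k n : ℕ) :
    coeff n ((1 - X ^ k) * f) = coeff n f - if k ≤ n then coeff (n - k) f else 0 := by
  rw [sub_mul, one_mul, map_sub, coeff_X_pow_mul']

end PowerSeries

open PowerSeries
open scoped ArithmeticFunction.zeta

namespace ArithmeticFunction

variable {R : Type*}

noncomputable def eulerFactor [Semiring R] (f : ArithmeticFunction R) (p : ℕ) : R⟦X⟧ :=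
  mk fun k => f (p ^ k)

@[simp]
theorem coeff_eulerFactor [Semiring R] (f : ArithmeticFunction R) (p k : ℕ) :
    coeff k (f.eulerFactor p) = f (p ^ k) :=
  coeff_mk _ _

theorem eulerFactor_mul [Semiring R] (f g : ArithmeticFunction R) {p : ℕ} (hp : p.Prime) :
    (f * g).eulerFactor p = f.eulerFactor p * g.eulerFactor p := by
  ext n
  rw [coeff_eulerFactor, mul_apply, Nat.sum_divisorsAntidiagonal (f := fun x y => f x * g y),
    Nat.divisors_prime_pow hp, Finset.sum_map, coeff_mul,
    Finset.Nat.sum_antidiagonal_eq_sum_range_succ_mk]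
  refine Finset.sum_congr rfl fun j hj => ?_
  simp [Nat.pow_div (Finset.mem_range_succ_iff.1 hj) hp.pos]

theorem IsMultiplicative.eq_of_eulerFactor_eq [CommSemiring R] {f g : ArithmeticFunction R}
    (hf : f.IsMultiplicative) (hg : g.IsMultiplicative)
    (h : ∀ p, p.Prime → f.eulerFactor p = g.eulerFactor p) : f = g := by
  refine (hf.eq_iff_eq_on_prime_powers f g hg).2 fun p k hp => ?_
  simpa using congrArg (coeff k) (h p hp)

theorem eulerFactor_zeta [Semiring R] {p : ℕ} (hp : p ≠ 0) :
    (ζ : ArithmeticFunction R).eulerFactor p = mk 1 := by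
  ext k
  simp [hp]

open scoped Classical in
noncomputable def powIndicator [Zero R] [One R] (k : ℕ) : ArithmeticFunction R :=
  ⟨fun n => if n ≠ 0 ∧ ∃ r, r ^ k = n then 1 else 0, by simp⟩

theorem isMultiplicative_powIndicator [MonoidWithZero R] (k : ℕ) :
    (powIndicator k : ArithmeticFunction R).IsMultiplicative := by
  refine IsMultiplicative.iff_ne_zero.2 ⟨by simp [powIndicator], fun hm hn hmn => ?_⟩
  simp only [powIndicator, coe_mk, ne_eq, mul_eq_zero, hm, hn, or_self, not_false_eq_true,
    true_and, hmn.exists_pow_eq_mul_iff, ite_zero_mul_ite_zero, mul_one]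

theorem eulerFactor_powIndicator [CommRing R] {p k : ℕ} (hp : p.Prime) (hk : k ≠ 0) :
    (powIndicator k : ArithmeticFunction R).eulerFactor p = expand k hk (mk 1) := by
  ext n
  rw [coeff_eulerFactor, coeff_expand]
  simp [powIndicator, hp.ne_zero, hp.exists_pow_eq_pow_iff hk]

end ArithmeticFunction

theorem tau13_eq_powIndicator_mul_zeta : tau13 = powIndicator 3 * (ζ : ArithmeticFunction ℤ) := by
  ext n
  rw [coe_mul_zeta_apply]
  simp only [powIndicator, tau13, coe_mk, Finset.sum_boole]
  congr 1
  rw [← Finset.card_image_of_injective _ (Nat.pow_left_injective three_ne_zero)]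
  congr 1
  ext d
  simp only [Finset.mem_image, Finset.mem_filter, Nat.mem_divisors]
  constructor
  · rintro ⟨b, ⟨⟨-, hn⟩, hb⟩, rfl⟩
    exact ⟨⟨hb, hn⟩, ne_zero_of_dvd_ne_zero hn hb, b, rfl⟩
  · rintro ⟨⟨hd, hn⟩, -, b, rfl⟩
    exact ⟨b, ⟨⟨(dvd_pow_self b three_ne_zero).trans hd, hn⟩, hd⟩, rfl⟩

theorem isMultiplicative_tau13 : tau13.IsMultiplicative :=
  tau13_eq_powIndicator_mul_zeta ▸
    (isMultiplicative_powIndicator 3).mul isMultiplicative_zeta.natCast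

theorem one_sub_X_mul_one_sub_X_pow_three_mul_eulerFactor_tau13 {p : ℕ} (hp : p.Prime) :
    (1 - X) * (1 - X ^ 3) * tau13.eulerFactor p = 1 := by
  have h := congrArg (expand 3 three_ne_zero) (mk_one_mul_one_sub_eq_one ℤ)
  rw [map_mul, map_sub, map_one, expand_X] at h
  rw [tau13_eq_powIndicator_mul_zeta, eulerFactor_mul _ _ hp,
    eulerFactor_powIndicator hp three_ne_zero, eulerFactor_zeta hp.ne_zero]
  linear_combination (1 - X) * mk 1 * h + mk_one_mul_one_sub_eq_one ℤ

theorem isMultiplicative_phieA : phieA.IsMultiplicative := by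
  refine IsMultiplicative.iff_ne_zero.2 ⟨by simp [phieA], fun hm hn hmn => ?_⟩
  simp only [phieA, coe_mk, mul_ne_zero hm hn, hm, hn, if_false, Nat.factorization_mul hm hn]
  rw [Finsupp.prod_add_index_of_disjoint, Nat.cast_mul]
  simpa [Nat.support_factorization] using hmn.disjoint_primeFactors

theorem eulerFactor_phieA {p : ℕ} (hp : p.Prime) :
    phieA.eulerFactor p = mk fun k => if k = 0 then 1 else (Nat.totient k : ℤ) := by
  ext k
  rw [coeff_eulerFactor, coeff_mk]
  rcases eq_or_ne k 0 with rfl | hk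
  · simp [phieA]
  · simp [phieA, hk, hp.ne_zero, Finsupp.prod, Nat.primeFactors_prime_pow hk hp,
      hp.factorization_pow]

theorem eulerFactor_eq_one_sub_X_mul_one_sub_X_pow_three_mul_eulerFactor_phieA
    {v : ArithmeticFunction ℤ} {p : ℕ} (hp : p.Prime) (h0 : v 1 = 1)
    (h14 : ∀ a : ℕ, 1 ≤ a → a ≤ 4 → v (p ^ a) = 0)
    (h5 : ∀ a : ℕ, 5 ≤ a → v (p ^ a) =
      (Nat.totient a : ℤ) - Nat.totient (a - 1) - Nat.totient (a - 3) + Nat.totient (a - 4)) :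
    v.eulerFactor p = (1 - X) * (1 - X ^ 3) * phieA.eulerFactor p := by
  ext a
  nth_rw 1 [← pow_one (X : ℤ⟦X⟧)]
  rw [mul_assoc, coeff_one_sub_X_pow_mul, coeff_one_sub_X_pow_mul, coeff_one_sub_X_pow_mul]
  simp only [eulerFactor_phieA hp, coeff_eulerFactor, coeff_mk]
  obtain rfl | ⟨ha1, ha4⟩ | ha : a = 0 ∨ (1 ≤ a ∧ a ≤ 4) ∨ 5 ≤ a := by omega
  · simp [h0]
  · rw [h14 a ha1 ha4]
    interval_cases a <;>
      simp [Nat.totient_prime Nat.prime_three, show Nat.totient 4 = 2 by decide]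
  · rw [h5 a ha, Nat.sub_sub]
    split_ifs <;> first | omega | ring

theorem phie_eq_v_mul_tau13 (v : ArithmeticFunction ℤ) (hv : v.IsMultiplicative)
    (hv1 : ∀ p : ℕ, p.Prime → ∀ a : ℕ, 1 ≤ a → a ≤ 4 → v (p ^ a) = 0)
    (hv2 : ∀ p : ℕ, p.Prime → ∀ a : ℕ, 5 ≤ a → v (p ^ a) =
      (Nat.totient a : ℤ) - Nat.totient (a - 1) - Nat.totient (a - 3) + Nat.totient (a - 4)) :
    phieA = v * tau13 := by
  refine isMultiplicative_phieA.eq_of_eulerFactor_eq (hv.mul isMultiplicative_tau13)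
    fun p hp => ?_
  rw [eulerFactor_mul _ _ hp, eulerFactor_eq_one_sub_X_mul_one_sub_X_pow_three_mul_eulerFactor_phieA
    hp hv.map_one (hv1 p hp) (hv2 p hp)]
  linear_combination (-phieA.eulerFactor p) *
    one_sub_X_mul_one_sub_X_pow_three_mul_eulerFactor_tau13 hp
end
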